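/- arXiv:1203.0090 — 2 statements merged into one kernel-verified Lean document; each statement's English description precedes it below -/
import Mathlib

section
/- Let M be a matroid with finite ground set and let X be a series class of M with |X| = p+1. If X is not a circuit of M, then T_M(x,y) = (x^p + x^{p-1} + \cdots + x + 1) T_{M \setminus X}(x,y) + T_{M/X}(x,y). -/
open MvPolynomial Finset
open scoped Matroid

namespace TuttePaper

open Classical

variable {α : Type*}

/-- The rank of a set in a matroid: the maximum cardinality of an independent subset. -/
noncomputable def rk (M : Matroid α) (A : Set α) : ℕ :=
  sSup {n | ∃ I, M.Indep I ∧ I ⊆ A ∧ I.ncard = n}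

/-- The Tutte polynomial of a matroid with finite ground set, as an element of ℤ[x,y];
the variable `X 0` plays the role of `x` and `X 1` that of `y`:
`T_M(x,y) = ∑_{A ⊆ E} (x-1)^(r(E)-r(A)) (y-1)^(|A|-r(A))`. -/
noncomputable def tutte (M : Matroid α) : MvPolynomial (Fin 2) ℤ :=
  if hE : M.E.Finite then
    ∑ A ∈ hE.toFinset.powerset,
      (X 0 - 1) ^ (rk M M.E - rk M ↑A) * (X 1 - 1) ^ (A.card - rk M ↑A)
  else 0

/-- The Tutte polynomial with `x` evaluated at `1`, i.e. `T_M(1,y)`, as an element of ℤ[x,y]. -/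
noncomputable def tutteX1 (M : Matroid α) : MvPolynomial (Fin 2) ℤ :=
  eval₂ C (fun i => if i = 0 then 1 else X 1) (tutte M)

/-- A loop of a matroid: an element whose singleton has rank zero. -/
def IsLoop (M : Matroid α) (e : α) : Prop := rk M {e} = 0

/-- A coloop of a matroid: an element contained in every basis. -/
def IsColoop (M : Matroid α) (e : α) : Prop := ∀ B, M.IsBase B → e ∈ B

/-- A circuit of a matroid: a minimal dependent set. -/
def IsCircuit (M : Matroid α) (C : Set α) : Prop :=
  C ⊆ M.E ∧ ¬ M.Indep C ∧ ∀ D ⊂ C, M.Indep D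

/-- A hyperplane of a matroid: a flat of rank `r(M) - 1`. -/
def IsHyperplane (M : Matroid α) (H : Set α) : Prop :=
  M.IsFlat H ∧ rk M H + 1 = rk M M.E

/-- Deletion of a set of elements from a matroid. -/
def deleteSet (M : Matroid α) (D : Set α) : Matroid α := M ↾ (M.E \ D)

/-- Contraction of a set of elements in a matroid, `M/C = (M✶ \ C)✶`. -/
def contractSet (M : Matroid α) (C : Set α) : Matroid α := ((M✶) ↾ (M.E \ C))✶

/-- Deletion of a single element. -/
def deleteElem (M : Matroid α) (e : α) : Matroid α := deleteSet M {e}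

/-- Contraction of a single element. -/
def contractElem (M : Matroid α) (e : α) : Matroid α := contractSet M {e}

/-- A matroid is paving if every circuit has size at least the rank of the matroid. -/
def Paving (M : Matroid α) : Prop := ∀ C, IsCircuit M C → rk M M.E ≤ C.ncard

/-- A matroid is sparse paving if it is paving and any two distinct circuits of size `r(M)`
have symmetric difference of size greater than two. -/
def SparsePaving (M : Matroid α) : Prop :=
  Paving M ∧ ∀ C₁ C₂, IsCircuit M C₁ → IsCircuit M C₂ →
    C₁.ncard = rk M M.E → C₂.ncard = rk M M.E → C₁ ≠ C₂ → 2 < (symmDiff C₁ C₂).ncard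

/-- An `m`-partition of a set `E`: a collection of at least two subsets of `E`, each with at
least `m` elements, such that every `m`-element subset of `E` is contained in exactly one
member of the collection. -/
def IsMPartition (m : ℕ) (E : Set α) (T : Set (Set α)) : Prop :=
  1 < T.ncard ∧ (∀ B ∈ T, B ⊆ E ∧ m ≤ B.ncard) ∧
    ∀ S ⊆ E, S.ncard = m → ∃! B, B ∈ T ∧ S ⊆ B

/-- `tcoef M i j` is the coefficient `t_{ij}` of `x^i y^j` in the Tutte polynomial of `M`. -/
noncomputable def tcoef (M : Matroid α) (i j : ℕ) : ℤ :=
  MvPolynomial.coeff (Finsupp.single (0 : Fin 2) i + Finsupp.single (1 : Fin 2) j) (tutte M)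

/-- The characteristic polynomial `χ_N(λ) = ∑_{A ⊆ E} (-1)^{|A|} λ^{r(E)-r(A)}` of a matroid,
evaluated at an element `l` of a commutative ring. -/
noncomputable def charEval {R : Type*} [CommRing R] (N : Matroid α) (l : R) : R :=
  if hE : N.E.Finite then
    ∑ A ∈ hE.toFinset.powerset, (-1 : R) ^ A.card * l ^ (rk N N.E - rk N ↑A)
  else 0

/-- Crapo's coboundary polynomial `χ̄_M(λ,t) = ∑_{X flat of M} t^{|X|} χ_{M/X}(λ)`,
evaluated at elements `l`, `t` of a commutative ring. -/
noncomputable def cobEval {R : Type*} [CommRing R] (M : Matroid α) (l t : R) : R :=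
  if hE : M.E.Finite then
    (hE.toFinset.powerset.filter (fun F : Finset α => M.IsFlat ↑F)).sum
      (fun F => t ^ F.card * charEval (contractSet M ↑F) l)
  else 0


/-- A parallel class of a matroid: a maximal subset of the ground set in which any two
distinct elements are parallel (i.e. form a two-element circuit) and no element is a loop. -/
def IsParallelClass (M : Matroid α) (P : Set α) : Prop :=
  P ⊆ M.E ∧ (∀ a ∈ P, ¬ IsLoop M a) ∧
    (∀ a ∈ P, ∀ b ∈ P, a ≠ b → IsCircuit M {a, b}) ∧
    ∀ Q, P ⊆ Q → Q ⊆ M.E → (∀ a ∈ Q, ¬ IsLoop M a) →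
      (∀ a ∈ Q, ∀ b ∈ Q, a ≠ b → IsCircuit M {a, b}) → Q = P

/-! Write `r*` for the rank of `M✶`. By `r(X) + r*(E) = r*(E \ X) + |X|`, and since the
elements of the series class `S` are pairwise parallel nonloops of `M✶`, so that
`r*(C ∪ U)` is the same for every nonempty `U ⊆ S`, we get `r(B ∪ T) = r(B) + |T|` for
`B ⊆ E \ S` and `T ⊊ S`; in particular `S` is independent, not being a circuit, and
`r(E) = r(E \ S) + p`. Writing each `A ⊆ E` as `B ∪ T`, the terms of `T_M` with `T ⊊ S`
are `(x - 1) ^ (p - |T|)` times the term of `B` in `T_{M∖S}`, and these factors sum to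
`1 + x + ⋯ + x ^ p`; the term with `T = S` is the term of `B` in `T_{M/S}`. -/

open Matroid Set

variable {M : Matroid α}

section Rank

variable {I X : Set α}

lemma cast_rk [M.RankFinite] (A : Set α) : (rk M A : ℕ∞) = M.eRk A := by
  obtain ⟨I, hI⟩ := M.exists_isBasis' A
  have hmax : IsGreatest {n | ∃ J, M.Indep J ∧ J ⊆ A ∧ J.ncard = n} I.ncard := by
    refine ⟨⟨I, hI.indep, hI.subset, rfl⟩, ?_⟩
    rintro _ ⟨J, hJ, hJA, rfl⟩
    have hJI : J.encard ≤ I.encard := hI.encard_eq_eRk ▸ hJ.encard_le_eRk_of_subset hJA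
    rwa [← hJ.finite.cast_ncard_eq, ← hI.indep.finite.cast_ncard_eq, Nat.cast_le] at hJI
  rw [rk, hmax.csSup_eq, hI.indep.finite.cast_ncard_eq, hI.encard_eq_eRk]

lemma rk_empty [M.RankFinite] : rk M ∅ = 0 := by
  rw [← Nat.cast_inj (R := ℕ∞), cast_rk, eRk_empty, Nat.cast_zero]

lemma rk_mono [M.RankFinite] {A B : Set α} (h : A ⊆ B) : rk M A ≤ rk M B := by
  rw [← Nat.cast_le (α := ℕ∞), cast_rk, cast_rk]
  exact M.eRk_mono h


lemma rk_eq_ncard_iff_indep [M.RankFinite] (hI : I.Finite) : rk M I = I.ncard ↔ M.Indep I := by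
  rw [indep_iff_eRk_eq_encard_of_finite hI, ← cast_rk, ← hI.cast_ncard_eq, Nat.cast_inj]

lemma rk_delete [M.RankFinite] {D : Set α} (hX : X ⊆ M.E \ D) : rk (M ＼ D) X = rk M X := by
  rw [← Nat.cast_inj (R := ℕ∞), cast_rk, cast_rk, delete_eq_restrict, restrict_eRk_eq _ hX]

lemma rk_contract_add_ncard [M.RankFinite] (hI : M.Indep I) (hX : X ⊆ M.E \ I) :
    rk (M ／ I) X + I.ncard = rk M (X ∪ I) := by
  obtain ⟨J, hJ⟩ := (M ／ I).exists_isBasis X hX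
  have hdisj : Disjoint J I := (subset_sdiff.1 (hJ.subset.trans hX)).2
  rw [← Nat.cast_inj (R := ℕ∞), Nat.cast_add, cast_rk, cast_rk, hI.finite.cast_ncard_eq,
    ← hJ.encard_eq_eRk, ← (hI.union_isBasis_union_of_contract_isBasis hJ).encard_eq_eRk,
    encard_union_eq hdisj]

lemma rk_union_eq_of_subset_closure [M.RankFinite] {C U S : Set α} (hUS : U ⊆ S)
    (hSU : S ⊆ M.closure U) : rk M (C ∪ U) = rk M (C ∪ S) := by
  rw [← Nat.cast_inj (R := ℕ∞), cast_rk, cast_rk]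
  refine le_antisymm (M.eRk_mono (union_subset_union_right C hUS)) ?_
  calc M.eRk (C ∪ S) ≤ M.eRk (C ∪ M.closure U) := M.eRk_mono (union_subset_union_right C hSU)
    _ = M.eRk (C ∪ U) := M.eRk_union_closure_right_eq C U

lemma rk_add_rk_dual_ground [M.Finite] (hX : X ⊆ M.E) :
    rk M X + rk M✶ M.E = rk M✶ (M.E \ X) + X.ncard := by
  have h := M✶.eRk_dual_add_eRank X hX
  rw [dual_dual] at h
  rw [← Nat.cast_inj (R := ℕ∞), Nat.cast_add, Nat.cast_add, cast_rk, cast_rk, cast_rk,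
    (M.ground_finite.subset hX).cast_ncard_eq, ← dual_ground, eRk_ground]
  exact h

end Rank

def IsParallelSet (M : Matroid α) (S : Set α) : Prop :=
  ∀ e ∈ S, M.IsNonloop e ∧ S ⊆ M.closure {e}

lemma IsParallelClass.isParallelSet [M.RankFinite] {S : Set α} (hS : IsParallelClass M S) :
    IsParallelSet M S := by
  obtain ⟨hSE, hnl, hcirc, -⟩ := hS
  have hnonloop : ∀ e ∈ S, M.IsNonloop e := fun e he => by
    have h1 : rk M {e} ≤ 1 := by
      rw [← Nat.cast_le (α := ℕ∞), cast_rk, Nat.cast_one]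
      exact M.eRk_singleton_le e
    have h2 : rk M {e} = 1 := by have := hnl e he; unfold IsLoop at this; omega
    rw [← eRk_singleton_eq_one_iff, ← cast_rk, h2, Nat.cast_one]
  refine fun e he => ⟨hnonloop e he, fun f hf => ?_⟩
  obtain rfl | hef := eq_or_ne e f
  · exact M.mem_closure_of_mem rfl (singleton_subset_iff.2 (hSE hf))
  have hdep : M.Dep {f, e} := by
    obtain ⟨hsub, hnind, -⟩ := hcirc e he f hf hef
    rw [Set.pair_comm] at hsub hnind
    exact ⟨hnind, hsub⟩
  exact ((hnonloop e he).indep.mem_closure_iff).2 (Or.inl hdep)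

section SeriesSet

variable [M.Finite] {S : Set α} (hS : IsParallelSet M✶ S)
include hS

lemma rk_union_of_ssubset {B T : Set α} (hB : B ⊆ M.E \ S) (hT : T ⊂ S) :
    rk M (B ∪ T) = rk M B + T.ncard := by
  obtain ⟨f, hfS, hfT⟩ := exists_of_ssubset hT
  have hSE : S ⊆ M.E := ((hS f hfS).2).trans (M✶.closure_subset_ground _)
  have hBE : B ⊆ M.E := hB.trans sdiff_subset
  have hBT := rk_add_rk_dual_ground (M := M) (union_subset hBE (hT.subset.trans hSE))
  have hB' := rk_add_rk_dual_ground (M := M) hBE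
  have hrest : rk M✶ (M.E \ (B ∪ S) ∪ (S \ T)) = rk M✶ (M.E \ (B ∪ S) ∪ S) :=
    rk_union_eq_of_subset_closure sdiff_subset
      ((hS f hfS).2.trans (M✶.closure_subset_closure (singleton_subset_iff.2 ⟨hfS, hfT⟩)))
  have hsplit : M.E \ (B ∪ T) = M.E \ (B ∪ S) ∪ (S \ T) := by
    ext x
    have := @hSE x; have := @hB x; have : x ∈ T → x ∈ S := fun h => hT.subset h
    simp only [mem_sdiff, Set.mem_union] at *
    tauto
  have hsplit' : M.E \ B = M.E \ (B ∪ S) ∪ S := by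
    ext x
    have := @hSE x; have := @hB x
    simp only [mem_sdiff, Set.mem_union] at *
    tauto
  have hdisj : Disjoint B T := disjoint_of_subset_right hT.subset (subset_sdiff.1 hB).2
  rw [hsplit, hrest, ncard_union_eq hdisj (M.ground_finite.subset hBE)
    (M.ground_finite.subset (hT.subset.trans hSE))] at hBT
  rw [hsplit'] at hB'
  omega

lemma rk_ground_add_one {e : α} (he : e ∈ S) : rk M M.E + 1 = rk M (M.E \ S) + S.ncard := by
  have hSE : S ⊆ M.E := ((hS e he).2).trans (M✶.closure_subset_ground _)
  have hground := rk_add_rk_dual_ground (M := M) subset_rfl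
  have hcompl := rk_add_rk_dual_ground (M := M) (sdiff_subset (s := M.E) (t := S))
  have hrkS : rk M✶ S = 1 := by
    have h := rk_union_eq_of_subset_closure (C := ∅) (singleton_subset_iff.2 he) (hS e he).2
    rw [empty_union, empty_union] at h
    rw [← h, ← Nat.cast_inj (R := ℕ∞), cast_rk, Nat.cast_one, eRk_singleton_eq_one_iff]
    exact (hS e he).1
  rw [sdiff_self, rk_empty] at hground
  rw [sdiff_sdiff_cancel_left hSE, hrkS] at hcompl
  have hcard := ncard_sdiff_add_ncard_of_subset hSE M.ground_finite
  omega

lemma indep_of_not_isCircuit (hSE : S ⊆ M.E) (hnc : ¬ IsCircuit M S) : M.Indep S := by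
  by_contra hdep
  refine hnc ⟨hSE, hdep, fun T hT => ?_⟩
  have h := rk_union_of_ssubset hS (empty_subset (M.E \ S)) hT
  rw [empty_union, rk_empty, zero_add] at h
  exact (rk_eq_ncard_iff_indep (M.ground_finite.subset (hT.subset.trans hSE))).1 h

end SeriesSet

lemma sum_powerset_union_of_disjoint {ι R : Type*} [DecidableEq ι] [AddCommMonoid R]
    {s t : Finset ι} (h : Disjoint s t) (f : Finset ι → R) :
    ∑ A ∈ (s ∪ t).powerset, f A = ∑ B ∈ s.powerset, ∑ C ∈ t.powerset, f (B ∪ C) := by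
  rw [← Finset.sum_product']
  refine Finset.sum_nbij' (fun A => (A ∩ s, A ∩ t)) (fun P => P.1 ∪ P.2) ?_ ?_ ?_ ?_ ?_
  · intro A _
    simp only [Finset.mem_product, Finset.mem_powerset]
    exact ⟨Finset.inter_subset_right, Finset.inter_subset_right⟩
  · rintro ⟨B, C⟩ hBC
    simp only [Finset.mem_product, Finset.mem_powerset] at hBC ⊢
    exact Finset.union_subset_union hBC.1 hBC.2
  · intro A hA
    rw [← Finset.inter_union_distrib_left, Finset.inter_eq_left.2 (Finset.mem_powerset.1 hA)]
  · rintro ⟨B, C⟩ hBC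
    simp only [Finset.mem_product, Finset.mem_powerset] at hBC
    simp only [Finset.union_inter_distrib_right, Finset.inter_eq_left.2 hBC.1,
      Finset.inter_eq_left.2 hBC.2, Finset.disjoint_iff_inter_eq_empty.1 (h.mono_left hBC.1),
      Finset.disjoint_iff_inter_eq_empty.1 (h.symm.mono_left hBC.2), Finset.union_empty,
      Finset.empty_union]
  · intro A hA
    rw [← Finset.inter_union_distrib_left, Finset.inter_eq_left.2 (Finset.mem_powerset.1 hA)]

lemma sum_pow_card_ssubset_eq_geom_sum {ι R : Type*} [CommRing R] [IsDomain R] {z : R}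
    (hz : z ≠ 0) (s : Finset ι) :
    ∑ t ∈ s.powerset.erase s, z ^ (#s - 1 - #t) = ∑ i ∈ range #s, (z + 1) ^ i := by
  -- after multiplication by `z`, both sides become `(z + 1) ^ #s - 1`
  refine mul_right_cancel₀ hz ?_
  have hbinom := Finset.sum_pow_mul_eq_add_pow 1 z s
  rw [← Finset.add_sum_erase _ _ (Finset.mem_powerset_self s)] at hbinom
  simp only [one_pow, one_mul, Nat.sub_self, pow_zero] at hbinom
  have hgeom := geom_sum_mul (z + 1) #s
  rw [add_sub_cancel_right] at hgeom
  rw [hgeom, add_comm z 1, ← hbinom, add_sub_cancel_left, Finset.sum_mul]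
  refine Finset.sum_congr rfl fun t ht => ?_
  have hts : #t < #s := Finset.card_lt_card (Finset.ssubset_iff_subset_ne.2
    ⟨Finset.mem_powerset.1 (Finset.mem_of_mem_erase ht), Finset.ne_of_mem_erase ht⟩)
  rw [← pow_succ]
  congr 1
  omega

noncomputable def tutteSummand (M : Matroid α) (A : Finset α) : MvPolynomial (Fin 2) ℤ :=
  (X 0 - 1) ^ (rk M M.E - rk M ↑A) * (X 1 - 1) ^ (A.card - rk M ↑A)

lemma tutte_eq_sum_tutteSummand {F : Finset α} (hF : ↑F = M.E) :
    tutte M = ∑ A ∈ F.powerset, tutteSummand M A := by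
  have hE : M.E.Finite := hF ▸ F.finite_toSet
  rw [tutte, dif_pos hE, show hE.toFinset = F from Finset.coe_injective (by simp [hF])]
  rfl

lemma tutteSummand_union_self [M.Finite] {s B : Finset α} (hs : M.Indep ↑s)
    (hB : (↑B : Set α) ⊆ M.E \ ↑s) : tutteSummand M (B ∪ s) = tutteSummand (M ／ ↑s) B := by
  have hBs := rk_contract_add_ncard hs hB
  have hEs := rk_contract_add_ncard hs (subset_refl (M.E \ ↑s))
  rw [sdiff_union_self, union_eq_left.2 hs.subset_ground] at hEs
  have hcard := Finset.card_union_of_disjoint (Finset.disjoint_coe.1 (subset_sdiff.1 hB).2)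
  rw [ncard_coe_finset] at hBs hEs
  unfold tutteSummand
  rw [contract_ground, Finset.coe_union, ← hBs, ← hEs, hcard]
  congr 2 <;> omega

lemma tutteSummand_union_of_ssubset [M.Finite] {s B T : Finset α} (hS : IsParallelSet M✶ ↑s)
    (hB : (↑B : Set α) ⊆ M.E \ ↑s) (hT : T ⊂ s) :
    tutteSummand M (B ∪ T) = (X 0 - 1) ^ (#s - 1 - #T) * tutteSummand (M ＼ ↑s) B := by
  obtain ⟨e, he, -⟩ := Finset.exists_of_ssubset hT
  have hground := rk_ground_add_one hS (Finset.mem_coe.2 he)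
  have hBT := rk_union_of_ssubset hS hB (Finset.coe_ssubset.2 hT)
  have hBle : rk M ↑B ≤ rk M (M.E \ ↑s) := rk_mono hB
  have hTs := Finset.card_lt_card hT
  have hcard := Finset.card_union_of_disjoint
    (Finset.disjoint_coe.1 ((subset_sdiff.1 hB).2.mono_right (Finset.coe_subset.2 hT.subset)))
  rw [ncard_coe_finset] at hBT hground
  unfold tutteSummand
  rw [delete_ground, rk_delete subset_rfl, rk_delete hB, Finset.coe_union, hBT, hcard,
    ← mul_assoc, ← pow_add]
  congr 2 <;> omega

lemma sum_tutteSummand_union [M.Finite] {s B : Finset α} (hS : IsParallelSet M✶ ↑s)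
    (hs : M.Indep ↑s) (hB : (↑B : Set α) ⊆ M.E \ ↑s) :
    ∑ T ∈ s.powerset, tutteSummand M (B ∪ T)
      = (∑ i ∈ range #s, X 0 ^ i) * tutteSummand (M ＼ ↑s) B + tutteSummand (M ／ ↑s) B := by
  have hx : (X 0 - 1 : MvPolynomial (Fin 2) ℤ) ≠ 0 := fun h => by
    simpa using congrArg constantCoeff h
  rw [← Finset.add_sum_erase _ _ (Finset.mem_powerset_self s), tutteSummand_union_self hs hB,
    Finset.sum_congr rfl fun T hT => tutteSummand_union_of_ssubset hS hB
      (Finset.ssubset_iff_subset_ne.2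
        ⟨Finset.mem_powerset.1 (Finset.mem_of_mem_erase hT), Finset.ne_of_mem_erase hT⟩),
    ← Finset.sum_mul, sum_pow_card_ssubset_eq_geom_sum hx, sub_add_cancel, add_comm]

/-- if `S` is a series class of size `p + 1` that is not a circuit, then
`T_M = (x^p + ⋯ + x + 1) T_{M∖S} + T_{M/S}`. -/
theorem tutte_seriesClass (M : Matroid α) (hE : M.E.Finite) (S : Set α) (p : ℕ)
    (hS : IsParallelClass (M✶) S) (hcard : S.ncard = p + 1) (hnc : ¬ IsCircuit M S) :
    tutte M = (∑ i ∈ range (p + 1), X 0 ^ i) * tutte (deleteSet M S)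
      + tutte (contractSet M S) := by
  have : M.Finite := ⟨hE⟩
  have hSE : S ⊆ M.E := hS.1
  have hpar := hS.isParallelSet
  have hSi := indep_of_not_isCircuit hpar hSE hnc
  obtain ⟨s, rfl⟩ := (hE.subset hSE).exists_finset_coe
  obtain ⟨d, hd⟩ := (hE.sdiff (t := (s : Set α))).exists_finset_coe
  have hds : Disjoint d s := by rw [← Finset.disjoint_coe, hd]; exact disjoint_sdiff_left
  rw [ncard_coe_finset] at hcard
  have hE' : ((d ∪ s : Finset α) : Set α) = M.E := by
    rw [Finset.coe_union, hd, sdiff_union_of_subset hSE]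
  rw [tutte_eq_sum_tutteSummand hE',
    tutte_eq_sum_tutteSummand (M := deleteSet M s) hd,
    tutte_eq_sum_tutteSummand (M := contractSet M s) hd,
    sum_powerset_union_of_disjoint hds, Finset.mul_sum, ← Finset.sum_add_distrib, ← hcard]
  exact Finset.sum_congr rfl fun B hB =>
    sum_tutteSummand_union hpar hSi (hd ▸ Finset.coe_subset.2 (Finset.mem_powerset.1 hB))

end TuttePaper
end

section
/- Let M be a rank-r matroid with n elements and write T_M(x,y) = \sum_{i,j} t_{ij} x^i y^j. Then M is paving if and only if t_{ij} = 0 for all pairs (i,j) with i \ge 2 and j \ge 1. -/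
open MvPolynomial Finset
open scoped Matroid

namespace TuttePaper

open Classical

variable {α : Type*}

/-!
Expanding the definition, `T_M = ∑_{A ⊆ E} (x-1)^{c(A)} (y-1)^{n(A)}` with corank
`c(A) = r(E) - r(A)` and nullity `n(A) = |A| - r(A)`. The coefficient of `x^i y^j` in
`(x-1)^c (y-1)^n` is `±C(c,i) C(n,j)`, so all coefficients with `i ≥ 2`, `j ≥ 1` vanish as soon as
no `A` has `c(A) ≥ 2` and `n(A) ≥ 1`. Conversely, if some `A` does, pick one maximising
`c(A) + n(A)`: no other exponent pair dominates `(c(A), n(A))`, so the coefficient of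
`x^{c(A)} y^{n(A)}` is the (positive) number of sets realising that pair. Finally `M` is paving iff
every dependent set has corank at most one, because a dependent set contains a circuit `C`, and
`r(C) = |C| - 1`.
-/

section TuttePolynomialCoefficients

variable {σ R : Type*} [CommRing R]

lemma X_sub_one_pow_eq_sum (v : σ) (c : ℕ) :
    (X v - 1 : MvPolynomial σ R) ^ c =
      ∑ k ∈ range (c + 1), monomial (Finsupp.single v k) ((-1) ^ (c - k) * (c.choose k : R)) := by
  rw [sub_eq_add_neg, add_pow]
  refine sum_congr rfl fun k _ => ?_
  rw [← C_mul_X_pow_eq_monomial, map_mul, map_pow, map_neg, map_one, map_natCast]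
  ring

lemma coeff_X_sub_one_pow_mul_X_sub_one_pow (a b i j : ℕ) :
    coeff (Finsupp.single (0 : Fin 2) i + Finsupp.single 1 j)
        ((X 0 - 1) ^ a * (X 1 - 1) ^ b : MvPolynomial (Fin 2) R) =
      (-1 : R) ^ (a - i + (b - j)) * a.choose i * b.choose j := by
  have single_add_single_eq_iff : ∀ k l, Finsupp.single (0 : Fin 2) k + Finsupp.single 1 l =
      Finsupp.single 0 i + Finsupp.single 1 j ↔ k = i ∧ l = j := by
    refine fun k l => ⟨fun h => ⟨?_, ?_⟩, by rintro ⟨rfl, rfl⟩; rfl⟩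
    · simpa using DFunLike.congr_fun h 0
    · simpa using DFunLike.congr_fun h 1
  rw [X_sub_one_pow_eq_sum, X_sub_one_pow_eq_sum, sum_mul_sum, coeff_sum]
  simp only [coeff_sum, monomial_mul, coeff_monomial, single_add_single_eq_iff, ite_and,
    sum_ite_irrel, sum_const_zero, sum_ite_eq', mem_range, Nat.lt_succ_iff]
  split_ifs with hi hj
  · ring
  · simp [Nat.choose_eq_zero_of_lt (not_le.mp hj)]
  · simp [Nat.choose_eq_zero_of_lt (not_le.mp hi)]

lemma coeff_sum_X_sub_one_pow_mul_eq_zero_iff [CharZero R] {ι : Type*} (s : Finset ι)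
    (c n : ι → ℕ) (i₀ j₀ : ℕ) :
    (∀ i j, i₀ ≤ i → j₀ ≤ j → coeff (Finsupp.single 0 i + Finsupp.single 1 j)
      (∑ x ∈ s, (X 0 - 1) ^ c x * (X 1 - 1) ^ n x : MvPolynomial (Fin 2) R) = 0) ↔
      ∀ x ∈ s, c x < i₀ ∨ n x < j₀ := by
  constructor
  · contrapose!
    rintro ⟨x, hxs, hx⟩
    set t := s.filter fun y => i₀ ≤ c y ∧ j₀ ≤ n y
    obtain ⟨z, hzt, hz⟩ := t.exists_max_image (fun y => c y + n y) ⟨x, mem_filter.2 ⟨hxs, hx⟩⟩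
    obtain ⟨hzs, hzi, hzj⟩ := mem_filter.1 hzt
    refine ⟨c z, n z, hzi, hzj, ?_⟩
    have hterm : ∀ y ∈ s, coeff (Finsupp.single 0 (c z) + Finsupp.single 1 (n z))
        ((X 0 - 1) ^ c y * (X 1 - 1) ^ n y : MvPolynomial (Fin 2) R) =
          if c y = c z ∧ n y = n z then 1 else 0 := by
      intro y hys
      rw [coeff_X_sub_one_pow_mul_X_sub_one_pow]
      by_cases hyz : c z ≤ c y ∧ n z ≤ n y
      · have := hz y (mem_filter.2 ⟨hys, hzi.trans hyz.1, hzj.trans hyz.2⟩)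
        obtain ⟨hc, hn⟩ : c y = c z ∧ n y = n z := by omega
        simp [hc, hn]
      · rw [if_neg (by omega)]
        rcases not_and_or.1 hyz with h | h <;> simp [Nat.choose_eq_zero_of_lt (not_le.1 h)]
    rw [coeff_sum, sum_congr rfl hterm, sum_boole, Nat.cast_ne_zero, ← pos_iff_ne_zero, card_pos]
    exact ⟨z, mem_filter.2 ⟨hzs, rfl, rfl⟩⟩
  · intro h i j hi hj
    rw [coeff_sum]
    refine sum_eq_zero fun x hx => ?_
    rw [coeff_X_sub_one_pow_mul_X_sub_one_pow]
    rcases h x hx with h | h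
    · simp [Nat.choose_eq_zero_of_lt (h.trans_le hi)]
    · simp [Nat.choose_eq_zero_of_lt (h.trans_le hj)]

end TuttePolynomialCoefficients

section Rank

variable {M : Matroid α} {A B C : Set α}

lemma cast_rk_eq_eRk (hA : A.Finite) : (rk M A : ℕ∞) = M.eRk A := by
  obtain ⟨I, hI⟩ := M.exists_isBasis' A
  have hIfin : I.Finite := hA.subset hI.subset
  have hmax : IsGreatest {n | ∃ J, M.Indep J ∧ J ⊆ A ∧ J.ncard = n} I.ncard := by
    refine ⟨⟨I, hI.indep, hI.subset, rfl⟩, ?_⟩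
    rintro _ ⟨J, hJ, hJA, rfl⟩
    have := hJ.encard_le_eRk_of_subset hJA
    rw [← hI.encard_eq_eRk, ← (hA.subset hJA).cast_ncard_eq, ← hIfin.cast_ncard_eq] at this
    exact_mod_cast this
  rw [rk, hmax.csSup_eq, hIfin.cast_ncard_eq, hI.encard_eq_eRk]

lemma rk_mono_s14 (hB : B.Finite) (hAB : A ⊆ B) : rk M A ≤ rk M B := by
  have := M.eRk_mono hAB
  rwa [← cast_rk_eq_eRk (hB.subset hAB), ← cast_rk_eq_eRk hB, Nat.cast_le] at this

lemma rk_le_ncard (hA : A.Finite) : rk M A ≤ A.ncard := by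
  have := M.eRk_le_encard A
  rwa [← cast_rk_eq_eRk hA, ← hA.cast_ncard_eq, Nat.cast_le] at this

lemma rk_lt_ncard_iff_dep (hA : A.Finite) (hAE : A ⊆ M.E) : rk M A < A.ncard ↔ M.Dep A := by
  rw [← Matroid.eRk_lt_encard_iff_dep_of_finite hA, ← cast_rk_eq_eRk hA, ← hA.cast_ncard_eq,
    Nat.cast_lt]

lemma isCircuit_iff_matroid_isCircuit : IsCircuit M C ↔ M.IsCircuit C := by
  rw [Matroid.isCircuit_iff_forall_ssubset, Matroid.Dep, IsCircuit]
  tauto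

lemma rk_add_one_eq_ncard_of_isCircuit (hC : M.IsCircuit C) (hCfin : C.Finite) :
    rk M C + 1 = C.ncard := by
  have := hC.eRk_add_one_eq
  rw [← cast_rk_eq_eRk hCfin, ← hCfin.cast_ncard_eq] at this
  exact_mod_cast this

end Rank

lemma paving_iff_forall_dep {M : Matroid α} (hE : M.E.Finite) :
    Paving M ↔ ∀ A, M.Dep A → rk M M.E ≤ rk M A + 1 := by
  refine ⟨fun hP A hA => ?_, fun h C hC => ?_⟩
  · obtain ⟨C, hCA, hC⟩ := hA.exists_isCircuit_subset
    calc rk M M.E ≤ C.ncard := hP C (isCircuit_iff_matroid_isCircuit.2 hC)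
      _ = rk M C + 1 := (rk_add_one_eq_ncard_of_isCircuit hC (hE.subset hC.subset_ground)).symm
      _ ≤ rk M A + 1 := by gcongr; exact rk_mono_s14 (hE.subset hA.subset_ground) hCA
  · rw [isCircuit_iff_matroid_isCircuit] at hC
    rw [← rk_add_one_eq_ncard_of_isCircuit hC (hE.subset hC.subset_ground)]
    exact h C hC.dep

theorem paving_iff_tcoef_general (M : Matroid α) (hE : M.E.Finite) :
    Paving M ↔ ∀ i j, 2 ≤ i → 1 ≤ j → tcoef M i j = 0 := by
  simp only [tcoef, tutte, dif_pos hE]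
  rw [coeff_sum_X_sub_one_pow_mul_eq_zero_iff, paving_iff_forall_dep hE]
  refine ⟨fun h A hA => ?_, fun h A hA => ?_⟩
  · have hAE : (A : Set α) ⊆ M.E := by simpa using hA
    have hrk := rk_le_ncard (M := M) A.finite_toSet
    have hdep := rk_lt_ncard_iff_dep A.finite_toSet hAE
    rw [Set.ncard_coe_finset] at hrk hdep
    by_cases hA : M.Dep A
    · exact .inl (by have := h _ hA; omega)
    · exact .inr (by rw [← hdep] at hA; omega)
  · have hAfin := hE.subset hA.subset_ground
    have hcorank := h hAfin.toFinset (by simpa using hA.subset_ground)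
    have hnullity := (rk_lt_ncard_iff_dep hAfin hA.subset_ground).2 hA
    rw [Set.Finite.coe_toFinset, ← Set.ncard_eq_toFinset_card _ hAfin] at hcorank
    omega

/-- a matroid is paving if and only if the coefficients `t_{ij}` of its Tutte
polynomial vanish for all `i ≥ 2` and `j ≥ 1`. -/
theorem paving_iff_tcoef (M : Matroid α) (hE : M.E.Finite) (r n : ℕ)
    (hr : rk M M.E = r) (hn : M.E.ncard = n) :
    Paving M ↔ ∀ i j, 2 ≤ i → 1 ≤ j → tcoef M i j = 0 :=
  paving_iff_tcoef_general M hE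

end TuttePaper
end
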